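/- arXiv:2103.03418 — 4 statements merged into one kernel-verified Lean document; each statement's English description precedes it below -/
import Mathlib

section
/- The set of vectors D = {(1,1,1), (1,0,0), (0,1,0), (1,-1,0), (0,1,1)} in ℤ³ is unimodular but not totally unimodular. -/
/-- An integer matrix is totally unimodular if every square submatrix
has determinant `0`, `1`, or `-1`. -/
def IsTU {m n : Type*} (A : Matrix m n ℤ) : Prop :=
  ∀ (k : ℕ) (f : Fin k → m) (g : Fin k → n), Function.Injective f → Function.Injective g →
    (A.submatrix f g).det ∈ ({0, 1, -1} : Set ℤ)

/-- A family of `r` integer vectors in `ℤⁿ` can be extended to a basis of `ℝⁿ` of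
integer vectors with determinant `±1`: there is an `n × n` integer matrix whose first
`r` columns are the given vectors and whose determinant is `1` or `-1`. -/
def ExtendsToUnimodularBasis {n r : ℕ} (hrn : r ≤ n) (v : Fin r → (Fin n → ℤ)) : Prop :=
  ∃ a : Fin n → (Fin n → ℤ), (∀ i : Fin r, a (Fin.castLE hrn i) = v i) ∧
    (Matrix.of (fun j i => a i j)).det ∈ ({1, -1} : Set ℤ)

/-- A set of vectors in `ℤⁿ` is unimodular if every linearly independent subset of it
can be extended to a basis of `ℝⁿ`, of integer vectors, with determinant `±1`. -/
def UnimodularSet {n : ℕ} (D : Set (Fin n → ℤ)) : Prop :=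
  ∀ (r : ℕ) (hrn : r ≤ n) (v : Fin r → (Fin n → ℤ)), Function.Injective v →
    (∀ i, v i ∈ D) →
    LinearIndependent ℝ (fun i : Fin r => fun j : Fin n => ((v i j : ℝ))) →
    ExtendsToUnimodularBasis hrn v

private lemma notli {f : Fin 3 → Fin 3 → ℝ} (c : Fin 3 → ℝ) (hc : c 0 ≠ 0)
    (hsum : c 0 • f 0 + c 1 • f 1 + c 2 • f 2 = 0) : ¬ LinearIndependent ℝ f := fun h =>
  hc (Fintype.linearIndependent_iff.mp h c (by simpa [Fin.sum_univ_three] using hsum) 0)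

set_option maxHeartbeats 4000000 in
/-- The set D = {(1,1,1), (1,0,0), (0,1,0), (1,-1,0), (0,1,1)} ⊆ ℤ³ is unimodular
but not totally unimodular (as the matrix having these vectors as columns). -/
theorem stmt_2 :
    UnimodularSet ({![1, 1, 1], ![1, 0, 0], ![0, 1, 0], ![1, -1, 0], ![0, 1, 1]} :
      Set (Fin 3 → ℤ)) ∧
    ¬ IsTU (Matrix.of (fun (i : Fin 3) (j : Fin 5) =>
        ![![1, 1, 1], ![1, 0, 0], ![0, 1, 0], ![1, -1, 0], ![0, 1, 1]] j i)) := by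
  constructor
  · intro r hrn v hinj hmem hli
    interval_cases r
    · exact ⟨![![1,0,0], ![0,1,0], ![0,0,1]], fun i => i.elim0,
        by norm_num [Matrix.det_fin_three, Matrix.cons_val_two]⟩
    · have h0 := hmem 0
      simp only [Set.mem_insert_iff, Set.mem_singleton_iff] at h0
      rcases h0 with h0|h0|h0|h0|h0 <;>
      first
      | (refine ⟨![v 0, ![1,0,0], ![0,1,0]], fun i => by fin_cases i <;> rfl, ?_⟩
         norm_num [Matrix.det_fin_three, Matrix.cons_val_two, Matrix.vecHead, Matrix.vecTail, h0]; done)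
      | (refine ⟨![v 0, ![1,1,1], ![0,1,0]], fun i => by fin_cases i <;> rfl, ?_⟩
         norm_num [Matrix.det_fin_three, Matrix.cons_val_two, Matrix.vecHead, Matrix.vecTail, h0]; done)
      | (refine ⟨![v 0, ![1,1,1], ![1,0,0]], fun i => by fin_cases i <;> rfl, ?_⟩
         norm_num [Matrix.det_fin_three, Matrix.cons_val_two, Matrix.vecHead, Matrix.vecTail, h0]; done)
    · have h0 := hmem 0
      have h1 := hmem 1
      simp only [Set.mem_insert_iff, Set.mem_singleton_iff] at h0 h1
      rcases h0 with h0|h0|h0|h0|h0 <;> rcases h1 with h1|h1|h1|h1|h1 <;>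
      first
      | exact absurd (hinj (h0.trans h1.symm)) (by decide)
      | (refine ⟨![v 0, v 1, ![1,1,1]], fun i => by fin_cases i <;> rfl, ?_⟩
         norm_num [Matrix.det_fin_three, Matrix.cons_val_two, Matrix.vecHead, Matrix.vecTail, h0, h1]; done)
      | (refine ⟨![v 0, v 1, ![1,0,0]], fun i => by fin_cases i <;> rfl, ?_⟩
         norm_num [Matrix.det_fin_three, Matrix.cons_val_two, Matrix.vecHead, Matrix.vecTail, h0, h1]; done)
      | (refine ⟨![v 0, v 1, ![0,1,0]], fun i => by fin_cases i <;> rfl, ?_⟩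
         norm_num [Matrix.det_fin_three, Matrix.cons_val_two, Matrix.vecHead, Matrix.vecTail, h0, h1]; done)
      | (refine ⟨![v 0, v 1, ![0,1,1]], fun i => by fin_cases i <;> rfl, ?_⟩
         norm_num [Matrix.det_fin_three, Matrix.cons_val_two, Matrix.vecHead, Matrix.vecTail, h0, h1]; done)
    · have h0 := hmem 0
      have h1 := hmem 1
      have h2 := hmem 2
      simp only [Set.mem_insert_iff, Set.mem_singleton_iff] at h0 h1 h2
      rcases h0 with h0|h0|h0|h0|h0 <;> rcases h1 with h1|h1|h1|h1|h1 <;>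
        rcases h2 with h2|h2|h2|h2|h2 <;>
      first
      | exact absurd (hinj (h0.trans h1.symm)) (by decide)
      | exact absurd (hinj (h0.trans h2.symm)) (by decide)
      | exact absurd (hinj (h1.trans h2.symm)) (by decide)
      | (refine ⟨v, fun i => congrArg v (Fin.ext rfl), ?_⟩
         norm_num [Matrix.det_fin_three, Matrix.cons_val_two, Matrix.vecHead, Matrix.vecTail, h0, h1, h2]; done)
      | (refine absurd hli (notli ![(1:ℝ),-1,-1] (by norm_num) ?_)
         funext j; fin_cases j <;> simp [h0, h1, h2] <;> norm_num; done)
      | (refine absurd hli (notli ![(-1:ℝ),1,-1] (by norm_num) ?_)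
         funext j; fin_cases j <;> simp [h0, h1, h2] <;> norm_num; done)
      | (refine absurd hli (notli ![(-1:ℝ),-1,1] (by norm_num) ?_)
         funext j; fin_cases j <;> simp [h0, h1, h2] <;> norm_num; done)
  · intro h
    have := h 2 ![0,1] ![0,3] (by decide) (by decide)
    revert this
    decide
end

section
/- Let f be a firm with strict preference order u¹ ≻ u² ≻ ⋯ ≻ u^L ≻ 0 over its acceptable sets of workers, where each uʲ ∈ {0,1}ⁿ, and define the continuum choice function Ĉh_f : [0,1]ⁿ → [0,1]ⁿ by the recursion t₀ = 0, z⁰ = x, and for k = 1,…,L: t_k = min( 1 − Σ_{j<k} t_j , min{ z_i^{k−1} : u_i^k ≠ 0 } ), z^k = z^{k−1} − t_k u^k, with Ĉh_f(x) = Σ_{k=1}^L t_k u^k. Then Ĉh_f satisfies the revealed preference property: for all x, x' ∈ [0,1]ⁿ with x' ≤ x componentwise, if Ĉh_f(x) ≤ x' then Ĉh_f(x') = Ĉh_f(x). -/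
/-- The recursive procedure defining the continuum choice function from a preference
list `u 0 ≻ u 1 ≻ ⋯` of acceptable sets (as 0-1 vectors).  `proc u x k` returns the
pair (total time spent so far `∑_{j ≤ k} t_j`, remaining subpopulation `z^k`); at each
step the time spent is the minimum of the time left and of the remaining quantities
`z_i^{k-1}` over coordinates `i` with `u k i ≠ 0`. -/
noncomputable def proc {n : ℕ} (u : ℕ → (Fin n → ℝ)) (x : Fin n → ℝ) : ℕ → ℝ × (Fin n → ℝ)
  | 0 => (0, x)
  | k + 1 =>
    let p := proc u x k
    let t := min (1 - p.1) (sInf {y : ℝ | ∃ i, u k i ≠ 0 ∧ y = p.2 i})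
    (p.1 + t, fun i => p.2 i - t * u k i)

/-- `tpar u x k` is the time `t_{k+1}` spent consuming `u k` (the `(k+1)`-st acceptable
set) in the procedure. -/
noncomputable def tpar {n : ℕ} (u : ℕ → (Fin n → ℝ)) (x : Fin n → ℝ) (k : ℕ) : ℝ :=
  (proc u x (k + 1)).1 - (proc u x k).1

/-- The continuum choice function `Ĉh_f(x) = ∑_{k=1}^{L} t_k u^k`. -/
noncomputable def chHat {n : ℕ} (u : ℕ → (Fin n → ℝ)) (L : ℕ) (x : Fin n → ℝ) :
    Fin n → ℝ :=
  fun i => ∑ k ∈ Finset.range L, tpar u x k * u k i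

/-- The set of remaining quantities over the support of `u k` at step `k`. -/
noncomputable def tset {n : ℕ} (u : ℕ → (Fin n → ℝ)) (x : Fin n → ℝ) (k : ℕ) : Set ℝ :=
  {y : ℝ | ∃ i, u k i ≠ 0 ∧ y = (proc u x k).2 i}

lemma tset_eq_image {n : ℕ} (u : ℕ → (Fin n → ℝ)) (x : Fin n → ℝ) (k : ℕ) :
    tset u x k = (proc u x k).2 '' {i | u k i ≠ 0} := by
  ext y
  simp only [tset, Set.mem_image, Set.mem_setOf_eq]
  constructor
  · rintro ⟨i, hi, rfl⟩; exact ⟨i, hi, rfl⟩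
  · rintro ⟨i, hi, rfl⟩; exact ⟨i, hi, rfl⟩

lemma tset_finite {n : ℕ} (u : ℕ → (Fin n → ℝ)) (x : Fin n → ℝ) (k : ℕ) :
    (tset u x k).Finite := by
  rw [tset_eq_image]; exact (Set.toFinite _).image _

lemma tpar_eq {n : ℕ} (u : ℕ → (Fin n → ℝ)) (x : Fin n → ℝ) (k : ℕ) :
    tpar u x k = min (1 - (proc u x k).1) (sInf (tset u x k)) := by
  simp [tpar, proc, tset]

lemma proc_fst {n : ℕ} (u : ℕ → (Fin n → ℝ)) (x : Fin n → ℝ) (k : ℕ) :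
    (proc u x k).1 = ∑ j ∈ Finset.range k, tpar u x j := by
  induction k with
  | zero => simp [proc]
  | succ k ih =>
    rw [Finset.sum_range_succ, ← ih, tpar]
    ring

lemma proc_snd_succ {n : ℕ} (u : ℕ → (Fin n → ℝ)) (x : Fin n → ℝ) (k : ℕ) (i : Fin n) :
    (proc u x (k + 1)).2 i = (proc u x k).2 i - tpar u x k * u k i := by
  rw [tpar_eq]
  simp [proc, tset]

lemma proc_snd {n : ℕ} (u : ℕ → (Fin n → ℝ)) (x : Fin n → ℝ) (k : ℕ) (i : Fin n) :
    (proc u x k).2 i = x i - ∑ j ∈ Finset.range k, tpar u x j * u j i := by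
  induction k with
  | zero => simp [proc]
  | succ k ih =>
    rw [proc_snd_succ, ih, Finset.sum_range_succ]
    ring

/-- Invariants of the procedure: the total time stays ≤ 1 and remainders stay ≥ 0. -/
lemma proc_inv {n L : ℕ} (u : ℕ → (Fin n → ℝ))
    (h01 : ∀ k < L, ∀ i, u k i = 0 ∨ u k i = 1)
    (hnz : ∀ k < L, u k ≠ 0)
    (x : Fin n → ℝ) (hx : ∀ i, x i ∈ Set.Icc (0 : ℝ) 1) :
    ∀ k ≤ L, (proc u x k).1 ≤ 1 ∧ ∀ i, 0 ≤ (proc u x k).2 i := by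
  intro k hk
  induction k with
  | zero => exact ⟨by norm_num [proc], fun i => by simpa [proc] using (hx i).1⟩
  | succ k ih =>
    have hkL : k < L := hk
    obtain ⟨hS, hz⟩ := ih hkL.le
    obtain ⟨i0, hi0⟩ : ∃ i, u k i ≠ 0 := Function.ne_iff.mp (hnz k hkL)
    have hne : (tset u x k).Nonempty := ⟨_, i0, hi0, rfl⟩
    have hinf0 : 0 ≤ sInf (tset u x k) :=
      le_csInf hne (by rintro y ⟨i, hi, rfl⟩; exact hz i)
    have ht0 : 0 ≤ tpar u x k := by
      rw [tpar_eq]; exact le_min (by linarith) hinf0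
    have htle : ∀ i, u k i ≠ 0 → tpar u x k ≤ (proc u x k).2 i := by
      intro i hi
      rw [tpar_eq]
      exact (min_le_right _ _).trans (csInf_le (tset_finite u x k).bddBelow ⟨i, hi, rfl⟩)
    refine ⟨?_, ?_⟩
    · have h1 : tpar u x k ≤ 1 - (proc u x k).1 := by
        rw [tpar_eq]; exact min_le_left _ _
      rw [proc_fst, Finset.sum_range_succ, ← proc_fst]
      linarith
    · intro i
      rw [proc_snd_succ]
      rcases h01 k hkL i with h | h
      · rw [h]; simpa using hz i
      · have := htle i (by rw [h]; norm_num)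
        rw [h]; linarith

lemma tpar_nonneg {n L : ℕ} (u : ℕ → (Fin n → ℝ))
    (h01 : ∀ k < L, ∀ i, u k i = 0 ∨ u k i = 1)
    (hnz : ∀ k < L, u k ≠ 0)
    (x : Fin n → ℝ) (hx : ∀ i, x i ∈ Set.Icc (0 : ℝ) 1) :
    ∀ k < L, 0 ≤ tpar u x k := by
  intro k hkL
  obtain ⟨hS, hz⟩ := proc_inv u h01 hnz x hx k hkL.le
  obtain ⟨i0, hi0⟩ : ∃ i, u k i ≠ 0 := Function.ne_iff.mp (hnz k hkL)
  have hne : (tset u x k).Nonempty := ⟨_, i0, hi0, rfl⟩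
  have hinf0 : 0 ≤ sInf (tset u x k) :=
    le_csInf hne (by rintro y ⟨i, hi, rfl⟩; exact hz i)
  rw [tpar_eq]; exact le_min (by linarith) hinf0

/-- Revealed preference property: for `x' ≤ x` componentwise, if `Ĉh_f(x) ≤ x'`
then `Ĉh_f(x') = Ĉh_f(x)`. -/
theorem stmt_14 {n L : ℕ} (u : ℕ → (Fin n → ℝ))
    (h01 : ∀ k < L, ∀ i, u k i = 0 ∨ u k i = 1)
    (hnz : ∀ k < L, u k ≠ 0)
    (x x' : Fin n → ℝ)
    (hx : ∀ i, x i ∈ Set.Icc (0 : ℝ) 1) (hx' : ∀ i, x' i ∈ Set.Icc (0 : ℝ) 1)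
    (hle : x' ≤ x) (hch : chHat u L x ≤ x') :
    chHat u L x' = chHat u L x := by
  have tnn := tpar_nonneg u h01 hnz x hx
  have key : ∀ k, k ≤ L → ∀ j < k, tpar u x' j = tpar u x j := by
    intro k
    induction k with
    | zero => intro _ j hj; omega
    | succ k ih =>
      intro hk
      have hkL : k < L := hk
      have ih' : ∀ j < k, tpar u x' j = tpar u x j := ih hkL.le
      have main : tpar u x' k = tpar u x k := by
       have hS : (proc u x' k).1 = (proc u x k).1 := by
         rw [proc_fst, proc_fst]
         exact Finset.sum_congr rfl fun j hj => ih' j (Finset.mem_range.mp hj)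
       have hzx' : ∀ i, (proc u x' k).2 i = x' i - ∑ j ∈ Finset.range k, tpar u x j * u j i := by
         intro i
         rw [proc_snd]
         congr 1
         exact Finset.sum_congr rfl fun j hj => by
           rw [ih' j (Finset.mem_range.mp hj)]
       have hzle : ∀ i, (proc u x' k).2 i ≤ (proc u x k).2 i := by
         intro i
         rw [hzx' i, proc_snd]
         have := hle i
         linarith
       have hzge : ∀ i, u k i ≠ 0 → tpar u x k ≤ (proc u x' k).2 i := by
         intro i hi
         have hui : u k i = 1 := (h01 k hkL i).resolve_left hi
         have hch' : ∑ j ∈ Finset.range L, tpar u x j * u j i ≤ x' i := hch i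
         have hsub : ∑ j ∈ Finset.Ico k L, tpar u x j * u j i
             = ∑ j ∈ Finset.range L, tpar u x j * u j i
               - ∑ j ∈ Finset.range k, tpar u x j * u j i := by
           rw [Finset.sum_Ico_eq_sub _ hkL.le]
         have hsingle : tpar u x k * u k i ≤ ∑ j ∈ Finset.Ico k L, tpar u x j * u j i := by
           refine Finset.single_le_sum (f := fun j => tpar u x j * u j i) (fun j hj => ?_) (Finset.mem_Ico.mpr ⟨le_rfl, hkL⟩)
           have hjL : j < L := (Finset.mem_Ico.mp hj).2
           have h0 : (0 : ℝ) ≤ u j i := by rcases h01 j hjL i with h | h <;> rw [h] <;> norm_num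
           exact mul_nonneg (tnn j hjL) h0
         rw [hzx' i]
         rw [hui] at hsingle
         linarith
       -- compare the two infima
       obtain ⟨i0, hi0⟩ : ∃ i, u k i ≠ 0 := Function.ne_iff.mp (hnz k hkL)
       have hA'ne : (tset u x' k).Nonempty := ⟨_, i0, hi0, rfl⟩
       have hAne : (tset u x k).Nonempty := ⟨_, i0, hi0, rfl⟩
       have hinf' : tpar u x k ≤ sInf (tset u x' k) :=
         le_csInf hA'ne (by rintro y ⟨i, hi, rfl⟩; exact hzge i hi)
       have hinfle : sInf (tset u x' k) ≤ sInf (tset u x k) := by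
         obtain ⟨i, hi, heq⟩ := hAne.csInf_mem (tset_finite u x k)
         calc sInf (tset u x' k) ≤ (proc u x' k).2 i :=
               csInf_le (tset_finite u x' k).bddBelow ⟨i, hi, rfl⟩
           _ ≤ (proc u x k).2 i := hzle i
           _ = sInf (tset u x k) := heq.symm
       rw [tpar_eq, tpar_eq, hS]
       refine le_antisymm (min_le_min le_rfl hinfle) (le_min (min_le_left _ _) ?_)
       calc min (1 - (proc u x k).1) (sInf (tset u x k)) = tpar u x k := (tpar_eq u x k).symm
         _ ≤ sInf (tset u x' k) := hinf'
      intro j hj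
      rcases Nat.lt_succ_iff_lt_or_eq.mp hj with h | h
      · exact ih' j h
      · subst h; exact main
  funext i
  unfold chHat
  exact Finset.sum_congr rfl fun k hk => by
    rw [key L le_rfl k (Finset.mem_range.mp hk)]
end

section
/- With Ĉh_f defined as in the previous context from the preference list u¹ ≻ ⋯ ≻ u^L ≻ 0, for every integral point x ∈ {0,1}ⁿ one has Ĉh_f(x) = u^j where j is the smallest index with u^j ≤ x componentwise (and Ĉh_f(x) = 0 if no such index exists). In particular Ĉh_f maps integral points to integral points and agrees on {0,1}ⁿ with the discrete choice function selecting the best available acceptable set. -/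
lemma proc_succ {n : ℕ} (u : ℕ → (Fin n → ℝ)) (x : Fin n → ℝ) (k : ℕ) :
    proc u x (k+1) =
      ((proc u x k).1 + min (1 - (proc u x k).1)
        (sInf {y : ℝ | ∃ i, u k i ≠ 0 ∧ y = (proc u x k).2 i}),
       fun i => (proc u x k).2 i -
        min (1 - (proc u x k).1)
        (sInf {y : ℝ | ∃ i, u k i ≠ 0 ∧ y = (proc u x k).2 i}) * u k i) := rfl

lemma proc_spec {n L : ℕ} (u : ℕ → (Fin n → ℝ))
    (h01 : ∀ k < L, ∀ i, u k i = 0 ∨ u k i = 1)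
    (hnz : ∀ k < L, u k ≠ 0)
    (x : Fin n → ℝ) (hx : ∀ i, x i = 0 ∨ x i = 1) :
    ∀ k, k ≤ L →
      ((∀ j < k, ¬ u j ≤ x) → proc u x k = (0, x)) ∧
      (∀ j, j < k → u j ≤ x → (∀ j' < j, ¬ u j' ≤ x) →
        proc u x k = (1, fun i => x i - u j i)) := by
  intro k
  induction k with
  | zero => exact fun _ => ⟨fun _ => rfl, fun j hj => absurd hj (Nat.not_lt_zero j)⟩
  | succ k ih =>
    intro hkL
    have hkLt : k < L := hkL
    obtain ⟨ih1, ih2⟩ := ih (Nat.le_of_succ_le hkL)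
    constructor
    · -- no acceptable among first k+1
      intro hnone
      have hp : proc u x k = (0, x) :=
        ih1 (fun j hj => hnone j (Nat.lt_succ_of_lt hj))
      -- find a coordinate with u k i = 1 and x i = 0
      have hk : ¬ u k ≤ x := hnone k (Nat.lt_succ_self k)
      obtain ⟨i, hi⟩ : ∃ i, ¬ u k i ≤ x i := by
        by_contra h; push_neg at h; exact hk h
      have hu1 : u k i = 1 := by
        rcases h01 k hkLt i with h | h
        · exact absurd (h ▸ (by rcases hx i with h' | h' <;> simp [h'] : (0:ℝ) ≤ x i)) hi
        · exact h
      have hx0 : x i = 0 := by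
        rcases hx i with h | h
        · exact h
        · exact absurd (by rw [hu1, h]) hi
      have hinf : sInf {y : ℝ | ∃ i, u k i ≠ 0 ∧ y = x i} = 0 := by
        apply IsLeast.csInf_eq
        constructor
        · exact ⟨i, by rw [hu1]; exact one_ne_zero, hx0.symm⟩
        · rintro y ⟨i', -, rfl⟩
          rcases hx i' with h | h <;> simp [h]
      rw [proc_succ, hp]
      simp only [hinf]
      norm_num
    · intro j hj hjle hjmin
      rcases Nat.lt_succ_iff_lt_or_eq.mp hj with hj' | rfl
      · -- first acceptable index already < k
        have hp : proc u x k = (1, fun i => x i - u j i) := ih2 j hj' hjle hjmin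
        have hjL : j < L := lt_trans hj' hkLt
        have hz01 : ∀ i, x i - u j i = 0 ∨ x i - u j i = 1 := by
          intro i
          rcases h01 j hjL i with h | h <;> rcases hx i with h' | h'
          · left; rw [h, h']; ring
          · right; rw [h, h']; ring
          · exfalso
            have := hjle i
            rw [h, h'] at this; linarith
          · left; rw [h, h']; ring
        obtain ⟨i0, hi0⟩ : ∃ i, u k i ≠ 0 := Function.ne_iff.mp (hnz k hkLt)
        have hinf : (0:ℝ) ≤ sInf {y : ℝ | ∃ i, u k i ≠ 0 ∧ y = x i - u j i} := by
          refine le_csInf ⟨_, i0, hi0, rfl⟩ ?_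
          rintro y ⟨i', -, rfl⟩
          rcases hz01 i' with h | h <;> simp [h]
        rw [proc_succ, hp]
        simp only
        have hmin : min (1 - (1:ℝ)) (sInf {y : ℝ | ∃ i, u k i ≠ 0 ∧ y = x i - u j i}) = 0 := by
          rw [min_eq_left (by linarith)]; ring
        rw [hmin]
        norm_num
      · -- j = k is the first acceptable index
        have hp : proc u x j = (0, x) := ih1 hjmin
        obtain ⟨i0, hi0⟩ : ∃ i, u j i ≠ 0 := Function.ne_iff.mp (hnz j hkLt)
        have hall1 : ∀ i, u j i ≠ 0 → x i = 1 := by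
          intro i hi
          have h1 : u j i = 1 := (h01 j hkLt i).resolve_left hi
          have := hjle i
          rcases hx i with h | h
          · rw [h1, h] at this; linarith
          · exact h
        have hinf : sInf {y : ℝ | ∃ i, u j i ≠ 0 ∧ y = x i} = 1 := by
          apply IsLeast.csInf_eq
          constructor
          · exact ⟨i0, hi0, (hall1 i0 hi0).symm⟩
          · rintro y ⟨i', hi', rfl⟩
            rw [hall1 i' hi']
        rw [proc_succ, hp]
        simp only [hinf]
        norm_num

/-- On integral points `x ∈ {0,1}ⁿ`, the continuum choice function agrees with the
discrete choice: `Ĉh_f(x) = u j` for the smallest index `j` with `u j ≤ x`, and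
`Ĉh_f(x) = 0` if no acceptable set is available at `x`.  In particular it maps
integral points to integral points. -/
theorem stmt_15 {n L : ℕ} (u : ℕ → (Fin n → ℝ))
    (h01 : ∀ k < L, ∀ i, u k i = 0 ∨ u k i = 1)
    (hnz : ∀ k < L, u k ≠ 0)
    (x : Fin n → ℝ) (hx : ∀ i, x i = 0 ∨ x i = 1) :
    (∀ j, j < L → u j ≤ x → (∀ j' < j, ¬ u j' ≤ x) → chHat u L x = u j) ∧
    ((∀ j, j < L → ¬ u j ≤ x) → chHat u L x = 0) ∧
    (∀ i, chHat u L x i = 0 ∨ chHat u L x i = 1) := by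
  have spec := proc_spec u h01 hnz x hx
  have h1 : ∀ j, j < L → u j ≤ x → (∀ j' < j, ¬ u j' ≤ x) → chHat u L x = u j := by
    intro j hjL hjle hjmin
    have htp : ∀ k < L, tpar u x k = if k = j then 1 else 0 := by
      intro k hkL
      by_cases hkj : k = j
      · subst hkj
        have hA : proc u x k = (0, x) := (spec k (le_of_lt hkL)).1 hjmin
        have hB : proc u x (k+1) = (1, fun i => x i - u k i) :=
          (spec (k+1) hkL).2 k (Nat.lt_succ_self k) hjle hjmin
        simp [tpar, hA, hB]
      · rcases lt_or_gt_of_ne hkj with hlt | hgt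
        · have hn : ∀ j' < k + 1, ¬ u j' ≤ x := fun j' hj' =>
            hjmin j' (lt_of_lt_of_le hj' hlt)
          have hA : proc u x k = (0, x) :=
            (spec k (le_of_lt hkL)).1 (fun j' hj' => hn j' (Nat.lt_succ_of_lt hj'))
          have hB : proc u x (k+1) = (0, x) := (spec (k+1) hkL).1 hn
          simp [tpar, hA, hB, hkj]
        · have hA : proc u x k = (1, fun i => x i - u j i) :=
            (spec k (le_of_lt hkL)).2 j hgt hjle hjmin
          have hB : proc u x (k+1) = (1, fun i => x i - u j i) :=
            (spec (k+1) hkL).2 j (Nat.lt_succ_of_lt hgt) hjle hjmin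
          simp [tpar, hA, hB, hkj]
    funext i
    unfold chHat
    rw [Finset.sum_eq_single_of_mem j (Finset.mem_range.mpr hjL)]
    · rw [htp j hjL]; simp
    · intro k hk hkj
      rw [htp k (Finset.mem_range.mp hk)]
      simp [hkj]
  have h2 : (∀ j, j < L → ¬ u j ≤ x) → chHat u L x = 0 := by
    intro hnone
    funext i
    unfold chHat
    apply Finset.sum_eq_zero
    intro k hk
    have hkL := Finset.mem_range.mp hk
    have hA : proc u x k = (0, x) :=
      (spec k (le_of_lt hkL)).1 (fun j' hj' => hnone j' (lt_trans hj' hkL))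
    have hB : proc u x (k+1) = (0, x) :=
      (spec (k+1) hkL).1 (fun j' hj' => hnone j' (lt_of_le_of_lt (Nat.lt_succ_iff.mp hj') hkL))
    simp [tpar, hA, hB]
  refine ⟨h1, h2, ?_⟩
  intro i
  by_cases h : ∃ j, j < L ∧ u j ≤ x
  · classical
    set j := Nat.find h with hj
    obtain ⟨hjL, hjle⟩ := Nat.find_spec h
    have hjmin : ∀ j' < j, ¬ u j' ≤ x := by
      intro j' hj' hle
      exact Nat.find_min h hj' ⟨lt_trans hj' hjL, hle⟩
    rw [h1 j hjL hjle hjmin]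
    exact h01 j hjL i
  · push_neg at h
    rw [h2 (fun j hj => h j hj)]
    left; rfl
end

section
/- With Ĉh_f defined as in the previous context, Ĉh_f is continuous on [0,1]ⁿ; more precisely, if x, x̃ ∈ [0,1]ⁿ satisfy max_i |x_i − x̃_i| < v, then the time parameters of the two defining procedures satisfy |t_k − t̃_k| < 2^{k−1} v for every k ∈ {1,…,L}, and hence max_i |Ĉh_f(x)_i − Ĉh_f(x̃)_i| < (2^L − 1) v. -/
private lemma abs_sInf_sub_lt_aux {n : ℕ} (P : Fin n → Prop) (A B : Fin n → ℝ) (c : ℝ)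
    (hne : ∃ i, P i) (hb : ∀ i, P i → |A i - B i| < c) :
    sInf {y | ∃ i, P i ∧ y = A i} - sInf {y | ∃ i, P i ∧ y = B i} < c := by
  have hfinA : {y | ∃ i, P i ∧ y = A i}.Finite := by
    have h : {y | ∃ i, P i ∧ y = A i} = A '' {i | P i} := by
      ext y; simp [Set.mem_image, eq_comm]
    rw [h]; exact (Set.toFinite _).image A
  have hfinB : {y | ∃ i, P i ∧ y = B i}.Finite := by
    have h : {y | ∃ i, P i ∧ y = B i} = B '' {i | P i} := by
      ext y; simp [Set.mem_image, eq_comm]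
    rw [h]; exact (Set.toFinite _).image B
  obtain ⟨i1, hi1⟩ := hne
  have hneB : {y | ∃ i, P i ∧ y = B i}.Nonempty := ⟨B i1, i1, hi1, rfl⟩
  obtain ⟨i0, hPi0, hEq⟩ := hneB.csInf_mem hfinB
  have h1 : sInf {y | ∃ i, P i ∧ y = A i} ≤ A i0 :=
    csInf_le hfinA.bddBelow ⟨i0, hPi0, rfl⟩
  have h2 := abs_lt.1 (hb i0 hPi0)
  rw [hEq]
  linarith [h2.1, h2.2]

private lemma abs_sInf_sub_lt {n : ℕ} (P : Fin n → Prop) (A B : Fin n → ℝ) (c : ℝ)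
    (hne : ∃ i, P i) (hb : ∀ i, P i → |A i - B i| < c) :
    |sInf {y | ∃ i, P i ∧ y = A i} - sInf {y | ∃ i, P i ∧ y = B i}| < c := by
  rw [abs_sub_lt_iff]
  exact ⟨abs_sInf_sub_lt_aux P A B c hne hb,
    abs_sInf_sub_lt_aux P B A c hne (fun i hi => by rw [abs_sub_comm]; exact hb i hi)⟩

/-- Continuity of the continuum choice function, quantitatively: if
`max_i |x_i − xt_i| < v` then the time parameters satisfy `|t_k − t̃_k| < 2^{k−1} v`
for every `k ∈ {1,…,L}` (here `tpar u x k` is the paper's `t_{k+1}`, so the bound reads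
`2^k v`), and hence `max_i |Ĉh_f(x)_i − Ĉh_f(xt)_i| < (2^L − 1) v`. -/
theorem stmt_16 {n L : ℕ} (hL : 0 < L) (u : ℕ → (Fin n → ℝ))
    (h01 : ∀ k < L, ∀ i, u k i = 0 ∨ u k i = 1)
    (hnz : ∀ k < L, u k ≠ 0)
    (x xt : Fin n → ℝ)
    (hx : ∀ i, x i ∈ Set.Icc (0 : ℝ) 1) (hx' : ∀ i, xt i ∈ Set.Icc (0 : ℝ) 1)
    (v : ℝ) (hv : ∀ i, |x i - xt i| < v) :
    (∀ k < L, |tpar u x k - tpar u xt k| < 2 ^ k * v) ∧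
    (∀ i, |chHat u L x i - chHat u L xt i| < (2 ^ L - 1) * v) := by
  have hn : 0 < n := by
    rcases Nat.eq_zero_or_pos n with h | h
    · exfalso; apply hnz 0 hL; subst h; funext i; exact i.elim0
    · exact h
  have hv0 : 0 < v := lt_of_le_of_lt (abs_nonneg _) (hv ⟨0, hn⟩)
  have hex : ∀ k < L, ∃ i, u k i ≠ 0 := by
    intro k hk
    by_contra h
    push_neg at h
    exact hnz k hk (funext fun i => h i)
  -- tpar as a min
  have htp : ∀ (y : Fin n → ℝ) (k : ℕ), tpar u y k =
      min (1 - (proc u y k).1) (sInf {w : ℝ | ∃ i, u k i ≠ 0 ∧ w = (proc u y k).2 i}) := by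
    intro y k; simp [tpar, proc]
  have hz1 : ∀ (y : Fin n → ℝ) (k : ℕ) (i : Fin n),
      (proc u y (k + 1)).2 i = (proc u y k).2 i - tpar u y k * u k i := by
    intro y k i; simp [tpar, proc]
  have hS1 : ∀ (y : Fin n → ℝ) (k : ℕ),
      (proc u y (k + 1)).1 = (proc u y k).1 + tpar u y k := by
    intro y k; simp [tpar]
  -- the t-bound given z and S bounds
  have tb : ∀ k < L, (∀ i, |(proc u x k).2 i - (proc u xt k).2 i| < 2 ^ k * v) →
      |(proc u x k).1 - (proc u xt k).1| ≤ (2 ^ k - 1) * v →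
      |tpar u x k - tpar u xt k| < 2 ^ k * v := by
    intro k hk hz hS
    rw [htp, htp]
    refine lt_of_le_of_lt (abs_min_sub_min_le_max _ _ _ _) (max_lt ?_ ?_)
    · have h1 : |1 - (proc u x k).1 - (1 - (proc u xt k).1)| =
          |(proc u x k).1 - (proc u xt k).1| := by
        rw [abs_sub_comm]; ring_nf
      rw [h1]
      have : ((2:ℝ) ^ k - 1) * v < 2 ^ k * v := by nlinarith
      linarith [hS]
    · exact abs_sInf_sub_lt (fun i => u k i ≠ 0) _ _ _ (hex k hk) (fun i _ => hz i)
  -- main induction on z and S bounds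
  have key : ∀ k, k ≤ L →
      (∀ i, |(proc u x k).2 i - (proc u xt k).2 i| < 2 ^ k * v) ∧
      |(proc u x k).1 - (proc u xt k).1| ≤ (2 ^ k - 1) * v := by
    intro k
    induction k with
    | zero =>
      intro _
      constructor
      · intro i; simpa [proc] using hv i
      · simp [proc]
    | succ k ih =>
      intro hk
      have hk' : k < L := hk
      obtain ⟨hz, hS⟩ := ih hk'.le
      have ht := tb k hk' hz hS
      constructor
      · intro i
        rw [hz1, hz1]
        have habs : |u k i| ≤ 1 := by
          rcases h01 k hk' i with h | h <;> rw [h] <;> norm_num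
        calc |(proc u x k).2 i - tpar u x k * u k i -
              ((proc u xt k).2 i - tpar u xt k * u k i)|
            = |((proc u x k).2 i - (proc u xt k).2 i) -
              (tpar u x k - tpar u xt k) * u k i| := by ring_nf
          _ ≤ |(proc u x k).2 i - (proc u xt k).2 i| +
              |(tpar u x k - tpar u xt k) * u k i| := abs_sub _ _
          _ ≤ |(proc u x k).2 i - (proc u xt k).2 i| +
              |tpar u x k - tpar u xt k| := by
                have := abs_mul (tpar u x k - tpar u xt k) (u k i)
                nlinarith [abs_nonneg (tpar u x k - tpar u xt k)]
          _ < 2 ^ k * v + 2 ^ k * v := add_lt_add (hz i) ht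
          _ = 2 ^ (k + 1) * v := by ring
      · rw [hS1, hS1]
        calc |(proc u x k).1 + tpar u x k - ((proc u xt k).1 + tpar u xt k)|
            = |((proc u x k).1 - (proc u xt k).1) + (tpar u x k - tpar u xt k)| := by
              ring_nf
          _ ≤ |(proc u x k).1 - (proc u xt k).1| + |tpar u x k - tpar u xt k| :=
              abs_add_le _ _
          _ ≤ (2 ^ k - 1) * v + 2 ^ k * v := by
              exact add_le_add hS ht.le
          _ = (2 ^ (k + 1) - 1) * v := by ring
  have tkey : ∀ k < L, |tpar u x k - tpar u xt k| < 2 ^ k * v := by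
    intro k hk
    exact tb k hk (key k hk.le).1 (key k hk.le).2
  refine ⟨tkey, fun i => ?_⟩
  have hsum : chHat u L x i - chHat u L xt i =
      ∑ k ∈ Finset.range L, (tpar u x k - tpar u xt k) * u k i := by
    rw [chHat, chHat, ← Finset.sum_sub_distrib]
    exact Finset.sum_congr rfl fun k _ => by ring
  rw [hsum]
  calc |∑ k ∈ Finset.range L, (tpar u x k - tpar u xt k) * u k i|
      ≤ ∑ k ∈ Finset.range L, |(tpar u x k - tpar u xt k) * u k i| :=
        Finset.abs_sum_le_sum_abs _ _
    _ < ∑ k ∈ Finset.range L, 2 ^ k * v := by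
        refine Finset.sum_lt_sum_of_nonempty (Finset.nonempty_range_iff.2 hL.ne') ?_
        intro k hk
        rw [Finset.mem_range] at hk
        rcases h01 k hk i with h | h
        · rw [h, mul_zero, abs_zero]; positivity
        · rw [h, mul_one]; exact tkey k hk
    _ = (2 ^ L - 1) * v := by
        rw [← Finset.sum_mul]
        congr 1
        rw [geom_sum_eq (by norm_num : (2:ℝ) ≠ 1)]
        norm_num
end
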